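/- Correctness of the FST formulation: define, for each node u on the trie and character c, δ'(u,c) := h(u,c) and σ'(u,c) := H(u,c). Then for any string w = c₁c₂...c_n, iterating state ← δ'(state, c_i) starting from the root ε while accumulating outputs σ'(state, c_i) (halting with output 'none' if the state becomes none) yields final state g(w) and accumulated output G(w). -/

import Mathlib

variable {α : Type*} [DecidableEq α]

/-- The longest nonempty prefix of `w` that belongs to `V` (or `[]` if none exists). -/
def maxPref (V : Finset (List α)) (w : List α) : List α :=
  ((w.inits.filter (fun p => decide (p ∈ V ∧ p ≠ []))).getLast?).getD []

/-- The suffix `q_w` of `w` obtained by removing the prefix `p_w`. -/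
def restSuffix (V : Finset (List α)) (w : List α) : List α :=
  w.drop (maxPref V w).length

/-- MaxMatch tokenization; `none` encodes the failure output `[UNK]`. -/
def maxMatch (V : Finset (List α)) (w : List α) : Option (List (List α)) :=
  if hw : w = [] then some []
  else if hp : maxPref V w = [] then none
  else
    match maxMatch V (w.drop (maxPref V w).length) with
    | none => none
    | some ts => some (maxPref V w :: ts)
  termination_by w.length
  decreasing_by
    simp only [List.length_drop]
    have h1 : 0 < (maxPref V w).length := List.length_pos_iff.mpr hp
    have h2 : 0 < w.length := List.length_pos_iff.mpr hw
    omega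

/-- `w` is "on the trie" built from `V`: it is `ε` or a prefix of a vocabulary token. -/
def OnTrie (V : Finset (List α)) (w : List α) : Prop :=
  w = [] ∨ ∃ t ∈ V, w <+: t

instance (V : Finset (List α)) (w : List α) : Decidable (OnTrie V w) := by
  unfold OnTrie; infer_instance

/-- MinPop matching: `(g w, G w)`. -/
def minPop (V : Finset (List α)) (w : List α) : Option (List α) × List (List α) :=
  if hT : OnTrie V w then (some w, [])
  else if hp : maxPref V w = [] then (none, [])
  else
    let r := minPop V (w.drop (maxPref V w).length)
    (r.1, maxPref V w :: r.2)
  termination_by w.length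
  decreasing_by
    simp only [List.length_drop]
    have hw : w ≠ [] := fun h => hT (Or.inl h)
    have h1 : 0 < (maxPref V w).length := List.length_pos_iff.mpr hp
    have h2 : 0 < w.length := List.length_pos_iff.mpr hw
    omega

/-- Failure link `f(u)`. -/
def fLink (V : Finset (List α)) (u : List α) : Option (List α) :=
  if maxPref V u = [] then none else (minPop V (restSuffix V u)).1

/-- Failure pops `F(u)`. -/
def fPops (V : Finset (List α)) (u : List α) : List (List α) :=
  if maxPref V u = [] then [] else maxPref V u :: (minPop V (restSuffix V u)).2

/-- The FST run: a left fold over the input characters, taking one state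
transition `δ'(u, c) = h(u, c) = g(u ++ [c])` per character while accumulating
the outputs `σ'(u, c) = H(u, c) = G(u ++ [c])`; once the state becomes `none`
it stays `none` and nothing more is emitted. -/
def fstRun (V : Finset (List α)) : Option (List α) → List α → Option (List α) × List (List α)
  | st, [] => (st, [])
  | none, _ :: _ => (none, [])
  | some u, c :: cs =>
    let r := minPop V (u ++ [c])
    let rest := fstRun V r.1 cs
    (rest.1, r.2 ++ rest.2)

/-!
MinPop matching is compositional: when `w` is off the trie, appending characters to `w` does not
change its longest vocabulary prefix `p_w`, so `g (w ++ x)` and `G (w ++ x)` are obtained by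
first matching `w` and then matching `g w ++ x`. Since `g` only returns nodes on the trie, the
FST run can apply this decomposition one character at a time, starting from the root.
-/

theorem OnTrie.of_prefix {β : Type*} {V : Finset (List β)} {w w' : List β} (h : w <+: w')
    (hw' : OnTrie V w') : OnTrie V w := by
  rcases hw' with rfl | ⟨t, ht, ht'⟩
  · exact Or.inl (List.prefix_nil.mp h)
  · exact Or.inr ⟨t, ht, h.trans ht'⟩

theorem maxPref_prefix (V : Finset (List α)) (w : List α) : maxPref V w <+: w := by
  unfold maxPref
  cases hl : (w.inits.filter (fun p => decide (p ∈ V ∧ p ≠ []))).getLast? with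
  | none => exact List.nil_prefix
  | some a =>
    obtain ⟨hne, rfl⟩ := List.mem_getLast?_eq_getLast hl
    exact (List.mem_inits _ _).mp (List.mem_filter.mp (List.getLast_mem hne)).1

/- Every nonempty vocabulary prefix of `w ++ x` that is longer than `w` would put `w` on the
trie. -/
theorem maxPref_append {V : Finset (List α)} {w : List α} (hw : ¬OnTrie V w) (x : List α) :
    maxPref V (w ++ x) = maxPref V w := by
  have hlong :
      (x.inits.tail.map (w ++ ·)).filter (fun p => decide (p ∈ V ∧ p ≠ [])) = [] := by
    refine List.filter_eq_nil_iff.mpr fun p hp => ?_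
    obtain ⟨s, -, rfl⟩ := List.mem_map.mp hp
    simpa using fun hs => absurd (Or.inr ⟨w ++ s, hs, List.prefix_append w s⟩) hw
  rw [maxPref, maxPref, List.inits_append, List.filter_append, hlong, List.append_nil]

theorem restSuffix_append {V : Finset (List α)} {w : List α} (hw : ¬OnTrie V w) (x : List α) :
    restSuffix V (w ++ x) = restSuffix V w ++ x := by
  rw [restSuffix, restSuffix, maxPref_append hw, List.drop_append,
    Nat.sub_eq_zero_of_le (maxPref_prefix V w).length_le, List.drop_zero]

section minPop

variable {V : Finset (List α)} {w : List α}

theorem minPop_of_onTrie (hw : OnTrie V w) : minPop V w = (some w, []) := by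
  rw [minPop, dif_pos hw]

theorem minPop_of_maxPref_eq_nil (hw : ¬OnTrie V w) (hp : maxPref V w = []) :
    minPop V w = (none, []) := by
  rw [minPop, dif_neg hw, dif_pos hp]

theorem minPop_of_maxPref_ne_nil (hw : ¬OnTrie V w) (hp : maxPref V w ≠ []) :
    minPop V w =
      ((minPop V (restSuffix V w)).1, maxPref V w :: (minPop V (restSuffix V w)).2) := by
  rw [minPop, dif_neg hw, dif_neg hp, restSuffix]

theorem minPop_append_of_maxPref_ne_nil (hw : ¬OnTrie V w) (hp : maxPref V w ≠ [])
    (x : List α) :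
    minPop V (w ++ x) =
      ((minPop V (restSuffix V w ++ x)).1, maxPref V w :: (minPop V (restSuffix V w ++ x)).2) := by
  have hwx : ¬OnTrie V (w ++ x) := mt (OnTrie.of_prefix (List.prefix_append w x)) hw
  rw [minPop_of_maxPref_ne_nil hwx (by rwa [maxPref_append hw]), maxPref_append hw,
    restSuffix_append hw]

theorem onTrie_of_minPop_fst_eq_some {u : List α} (h : (minPop V w).1 = some u) : OnTrie V u := by
  induction w using minPop.induct V with
  | case1 w hw =>
    rw [minPop_of_onTrie hw, Option.some_inj] at h
    exact h ▸ hw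
  | case2 w hw hp => simp [minPop_of_maxPref_eq_nil hw hp] at h
  | case3 w hw hp ih => exact ih (by rwa [minPop_of_maxPref_ne_nil hw hp] at h)

theorem minPop_append_of_fst_eq_none (h : (minPop V w).1 = none) (x : List α) :
    minPop V (w ++ x) = (none, (minPop V w).2) := by
  induction w using minPop.induct V with
  | case1 w hw => simp [minPop_of_onTrie hw] at h
  | case2 w hw hp =>
    have hwx : ¬OnTrie V (w ++ x) := mt (OnTrie.of_prefix (List.prefix_append w x)) hw
    rw [minPop_of_maxPref_eq_nil hw hp, minPop_of_maxPref_eq_nil hwx (by rwa [maxPref_append hw])]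
  | case3 w hw hp ih =>
    rw [← restSuffix.eq_1] at ih
    rw [minPop_of_maxPref_ne_nil hw hp] at h ⊢
    rw [minPop_append_of_maxPref_ne_nil hw hp, ih h]

theorem minPop_append_of_fst_eq_some {u : List α} (h : (minPop V w).1 = some u) (x : List α) :
    minPop V (w ++ x) =
      ((minPop V (u ++ x)).1, (minPop V w).2 ++ (minPop V (u ++ x)).2) := by
  induction w using minPop.induct V with
  | case1 w hw =>
    rw [minPop_of_onTrie hw, Option.some_inj] at h
    subst h
    rw [minPop_of_onTrie hw, List.nil_append]
  | case2 w hw hp => simp [minPop_of_maxPref_eq_nil hw hp] at h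
  | case3 w hw hp ih =>
    rw [← restSuffix.eq_1] at ih
    rw [minPop_of_maxPref_ne_nil hw hp] at h ⊢
    rw [minPop_append_of_maxPref_ne_nil hw hp, ih h, List.cons_append]

end minPop

theorem fstRun_none (V : Finset (List α)) (cs : List α) : fstRun V none cs = (none, []) := by
  cases cs <;> rfl

theorem fstRun_some_of_onTrie {V : Finset (List α)} {u : List α} (hu : OnTrie V u)
    (cs : List α) :
    fstRun V (some u) cs = minPop V (u ++ cs) := by
  induction cs generalizing u with
  | nil => rw [List.append_nil, minPop_of_onTrie hu]; rfl
  | cons c cs ih =>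
    rw [fstRun, show u ++ c :: cs = u ++ [c] ++ cs by simp]
    cases hc : (minPop V (u ++ [c])).1 with
    | none => rw [fstRun_none, minPop_append_of_fst_eq_none hc, List.append_nil]
    | some v => rw [ih (onTrie_of_minPop_fst_eq_some hc), minPop_append_of_fst_eq_some hc]

theorem stmt19_general (V : Finset (List α)) (w : List α) :
    fstRun V (some []) w = minPop V w :=
  fstRun_some_of_onTrie (Or.inl rfl) w

/-- iterating the FST transitions from the root `ε` over the
characters of `w` yields final state `g(w)` and accumulated output `G(w)`. -/
theorem stmt19 (V : Finset (List α)) (hV : ∀ t ∈ V, t ≠ []) (w : List α) :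
    fstRun V (some []) w = minPop V w :=
  stmt19_general V w
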